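/- If X is a nonempty finite partial groupoid (X_1 nonempty and finite), then X is p(X)-skeletal. -/

import Mathlib

/-- A symmetric (simplicial) set: a functor `Υᵒᵖ → Set`, where `Υ` has objects
`[n] = {0,…,n}` (encoded as `Fin (n+1)`) and all functions as morphisms.
For `α : [m] → [n]` and `x ∈ X_n`, `act α x` is `x · α ∈ X_m`. -/
structure SymSet where
  obj : ℕ → Type
  act : ∀ {m n : ℕ}, (Fin (m + 1) → Fin (n + 1)) → obj n → obj m
  act_id : ∀ {n : ℕ} (x : obj n), act id x = x
  act_comp : ∀ {m n k : ℕ} (α : Fin (m + 1) → Fin (n + 1)) (β : Fin (n + 1) → Fin (k + 1))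
      (x : obj k), act α (act β x) = act (β ∘ α) x

namespace SymSet

/-- `x_{ij} ∈ X_1`, the action on `x ∈ X_n` of the map `[1] → [n]` with `0 ↦ i`, `1 ↦ j`. -/
def edge (X : SymSet) {n : ℕ} (i j : Fin (n + 1)) (x : X.obj n) : X.obj 1 :=
  X.act (fun t : Fin 2 => if t = 0 then i else j) x

/-- The domain of an edge, its image under `ι₀ : [0] → [1]`, `0 ↦ 0`. -/
def edgeDom (X : SymSet) (f : X.obj 1) : X.obj 0 :=
  X.act (fun _ : Fin 1 => (0 : Fin 2)) f

/-- The codomain of an edge, its image under `ι₁ : [0] → [1]`, `0 ↦ 1`. -/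
def edgeCod (X : SymSet) (f : X.obj 1) : X.obj 0 :=
  X.act (fun _ : Fin 1 => (1 : Fin 2)) f

/-- The identity edge `id_a` on an object `a ∈ X_0`, induced by the unique map `[1] → [0]`. -/
def identityEdge (X : SymSet) (a : X.obj 0) : X.obj 1 :=
  X.act (fun _ : Fin 2 => (0 : Fin 1)) a

/-- An edge is an identity if it is in the image of `X_0 → X_1`. -/
def IsIdentityEdge (X : SymSet) (f : X.obj 1) : Prop :=
  ∃ a : X.obj 0, f = X.identityEdge a

/-- The tuple of edges `x_{ij}` (for `i < j` an edge `{i,j}` of the spine `T`)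
associated to an `n`-simplex `x`. -/
def spineTuple (X : SymSet) {n : ℕ} (T : SimpleGraph (Fin (n + 1))) (x : X.obj n) :
    ∀ i j : Fin (n + 1), i < j → T.Adj i j → X.obj 1 :=
  fun i j _ _ => X.edge i j x

/-- Membership in `lim_T X`: the components have matching endpoints. -/
def IsSpineLim (X : SymSet) {n : ℕ} (T : SimpleGraph (Fin (n + 1)))
    (e : ∀ i j : Fin (n + 1), i < j → T.Adj i j → X.obj 1) : Prop :=
  ∃ v : Fin (n + 1) → X.obj 0, ∀ (i j : Fin (n + 1)) (hlt : i < j) (h : T.Adj i j),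
    X.edgeDom (e i j hlt h) = v i ∧ X.edgeCod (e i j hlt h) = v j

/-- The limit `lim_T X` of the diagram associated to a spine `T`. -/
def SpineLim (X : SymSet) {n : ℕ} (T : SimpleGraph (Fin (n + 1))) : Type :=
  { e : ∀ i j : Fin (n + 1), i < j → T.Adj i j → X.obj 1 // X.IsSpineLim T e }

lemma spineTuple_isSpineLim (X : SymSet) {n : ℕ} (T : SimpleGraph (Fin (n + 1)))
    (x : X.obj n) : X.IsSpineLim T (X.spineTuple T x) := by
  refine ⟨fun i => X.act (fun _ : Fin 1 => i) x, fun i j hlt h => ⟨?_, ?_⟩⟩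
  · show X.act _ (X.act _ x) = _
    rw [X.act_comp]
    show X.act ((fun t : Fin 2 => if t = 0 then i else j) ∘ fun _ : Fin 1 => 0) x
      = X.act (fun _ : Fin 1 => i) x
    congr 1
  · show X.act _ (X.act _ x) = _
    rw [X.act_comp]
    show X.act ((fun t : Fin 2 => if t = 0 then i else j) ∘ fun _ : Fin 1 => 1) x
      = X.act (fun _ : Fin 1 => j) x
    congr 1

/-- The map `𝓔_T : X_n → lim_T X`. -/
def spineMap (X : SymSet) {n : ℕ} (T : SimpleGraph (Fin (n + 1))) (x : X.obj n) :
    X.SpineLim T :=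
  ⟨X.spineTuple T x, X.spineTuple_isSpineLim T x⟩

/-- A symmetric set is *spiny* if `𝓔_T` is injective for every `n ≥ 1` and
every spine `T` of `[n]` (a tree with vertex set `[n]`). -/
def Spiny (X : SymSet) : Prop :=
  ∀ n : ℕ, 1 ≤ n → ∀ T : SimpleGraph (Fin (n + 1)), T.IsTree →
    Function.Injective (X.spineMap T)

/-- An element `x ∈ X_n` is degenerate if `x = y · σ` for some noninvertible
surjection `σ : [n] → [k]`. -/
def Degenerate (X : SymSet) {n : ℕ} (x : X.obj n) : Prop :=
  ∃ (k : ℕ) (σ : Fin (n + 1) → Fin (k + 1)) (y : X.obj k),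
    Function.Surjective σ ∧ ¬ Function.Bijective σ ∧ x = X.act σ y

/-- A symmetric subset (subfunctor) of `X`. -/
structure SymSubset (X : SymSet) where
  carrier : ∀ n : ℕ, Set (X.obj n)
  act_mem : ∀ {m n : ℕ} (α : Fin (m + 1) → Fin (n + 1)) {x : X.obj n},
    x ∈ carrier n → X.act α x ∈ carrier m

/-- `X` is `n`-skeletal: the smallest symmetric subset of `X` containing all
of its `n`-simplices is all of `X`. -/
def IsSkeletal (X : SymSet) (n : ℕ) : Prop :=
  ∀ Y : SymSubset X, (∀ x : X.obj n, x ∈ Y.carrier n) →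
    ∀ (m : ℕ) (x : X.obj m), x ∈ Y.carrier m

/-- `X` has dimension `n`: it is `n`-skeletal but not `k`-skeletal for `k < n`
(for `n ≥ 1` this is equivalent to not being `(n-1)`-skeletal). -/
def HasDim (X : SymSet) (n : ℕ) : Prop :=
  X.IsSkeletal n ∧ ∀ k : ℕ, k < n → ¬ X.IsSkeletal k

/-- Two objects are related if there is an edge between them (in either direction). -/
def EdgeRel (X : SymSet) (a b : X.obj 0) : Prop :=
  ∃ f : X.obj 1, (X.edgeDom f = a ∧ X.edgeCod f = b) ∨ (X.edgeDom f = b ∧ X.edgeCod f = a)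

/-- `X` is connected: it is nonempty and any two objects are joined by a
zig-zag of edges. -/
def Connected (X : SymSet) : Prop :=
  Nonempty (X.obj 0) ∧ ∀ a b : X.obj 0, Relation.ReflTransGen X.EdgeRel a b

/-- `n_a`: the number of nonidentity edges with domain `a`. -/
noncomputable def nEdges (X : SymSet) (a : X.obj 0) : ℕ :=
  Nat.card { f : X.obj 1 // X.edgeDom f = a ∧ ¬ X.IsIdentityEdge f }

/-- `p(X)`: the maximum of the `n_a` over all objects `a`. -/
noncomputable def pVal (X : SymSet) : ℕ := ⨆ a : X.obj 0, X.nEdges a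

/-- A map of symmetric sets (a natural transformation). -/
structure SymMap (X Y : SymSet) where
  app : ∀ n : ℕ, X.obj n → Y.obj n
  naturality : ∀ {m n : ℕ} (α : Fin (m + 1) → Fin (n + 1)) (x : X.obj n),
    app m (X.act α x) = Y.act α (app n x)

/-- A map of symmetric sets is an isomorphism iff it is levelwise bijective. -/
def SymMap.IsIso {X Y : SymSet} (F : SymMap X Y) : Prop :=
  ∀ n : ℕ, Function.Bijective (F.app n)

/-- `X` and `Y` are isomorphic symmetric sets. -/
def Isomorphic (X Y : SymSet) : Prop := ∃ F : SymMap X Y, F.IsIso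

/-- The Bousfield–Segal map `𝓑_m : X_m → X_1^m`, `x ↦ (x_{01}, x_{02}, …, x_{0m})`. -/
def bousfield (X : SymSet) {m : ℕ} (x : X.obj m) : Fin m → X.obj 1 :=
  fun i => X.edge 0 i.succ x

/-- `X` is spiny in degrees below `q`: `𝓔_T` is injective for every spine `T`
of `[n]` for each `1 ≤ n ≤ q`. -/
def SpinyBelow (X : SymSet) (q : ℕ) : Prop :=
  ∀ n : ℕ, 1 ≤ n → n ≤ q → ∀ T : SimpleGraph (Fin (n + 1)), T.IsTree →
    Function.Injective (X.spineMap T)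

/-- `X` is a groupoid: `𝓔_T : X_n → lim_T X` is a bijection for every `n ≥ 1`
and every spine `T` of `[n]`. -/
def IsGroupoid (X : SymSet) : Prop :=
  ∀ n : ℕ, 1 ≤ n → ∀ T : SimpleGraph (Fin (n + 1)), T.IsTree →
    Function.Bijective (X.spineMap T)

/-- `X` is reduced: `X_0` is a singleton. -/
def Reduced (X : SymSet) : Prop := Nonempty (X.obj 0) ∧ Subsingleton (X.obj 0)

/-- A partial group is a reduced spiny symmetric set. -/
def IsPartialGroup (X : SymSet) : Prop := X.Reduced ∧ X.Spiny

/-- The levelwise product of two symmetric sets. -/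
def prod (X Y : SymSet) : SymSet where
  obj n := X.obj n × Y.obj n
  act α p := (X.act α p.1, Y.act α p.2)
  act_id p := by cases p with | mk a b => simp only [X.act_id, Y.act_id]
  act_comp α β p := by cases p with | mk a b => simp only [X.act_comp, Y.act_comp]

end SymSet

/-!
A partial groupoid is determined on `X_m` by the Bousfield–Segal map
`x ↦ (x_{01}, …, x_{0m})`, since the star at `0` is a spine. If `m > p(X)` the `m + 1` edges
`x_{00}, …, x_{0m}` cannot be pairwise distinct: otherwise `x_{01}, …, x_{0m}` would be `m`
distinct nonidentity edges out of the vertex `x_0` (an identity out of `x_0` is `x_{00}`).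
So `x_{0i} = x_{0j}` for some `i ≠ j` with `j ≠ 0`, and then `x` equals `x · σ` for the map `σ`
sending `j` to `i`, which misses `j`. Hence `x` is a degeneracy of the face `x · δ_j`, and
induction on `m` shows that every simplex lies in the symmetric subset generated by the
`p(X)`-simplices.
-/

namespace SymSet

variable (X : SymSet)

lemma edge_act {m n : ℕ} (σ : Fin (m + 1) → Fin (n + 1)) (i j : Fin (m + 1)) (x : X.obj n) :
    X.edge i j (X.act σ x) = X.edge (σ i) (σ j) x := by
  unfold edge
  rw [X.act_comp]
  congr 1
  funext t
  by_cases ht : t = 0 <;> simp [ht]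

lemma edgeDom_edge {n : ℕ} (i j : Fin (n + 1)) (x : X.obj n) :
    X.edgeDom (X.edge i j x) = X.act (fun _ => i) x := by
  unfold edgeDom edge
  rw [X.act_comp]
  rfl

lemma identityEdge_act_const {n : ℕ} (i : Fin (n + 1)) (x : X.obj n) :
    X.identityEdge (X.act (fun _ => i) x) = X.edge i i x := by
  unfold identityEdge edge
  rw [X.act_comp]
  congr 1
  funext t
  split_ifs <;> rfl

lemma edgeDom_identityEdge (a : X.obj 0) : X.edgeDom (X.identityEdge a) = a := by
  unfold edgeDom identityEdge
  rw [X.act_comp, Subsingleton.elim (α := Fin 1 → Fin 1) ((fun _ => 0) ∘ fun _ => 0) id,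
    X.act_id]

lemma nEdges_le_pVal [Finite (X.obj 1)] (a : X.obj 0) : X.nEdges a ≤ X.pVal :=
  le_ciSup ⟨Nat.card (X.obj 1), by rintro _ ⟨b, rfl⟩; exact Finite.card_subtype_le _⟩ a

lemma le_nEdges_of_injective [Finite (X.obj 1)] {m : ℕ} (x : X.obj m)
    (hx : Function.Injective fun k : Fin (m + 1) => X.edge 0 k x) :
    m ≤ X.nEdges (X.act (fun _ => 0) x) := by
  have hnonid (k : Fin m) : ¬ X.IsIdentityEdge (X.edge 0 k.succ x) := by
    rintro ⟨b, hb⟩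
    have hb0 : b = X.act (fun _ => 0) x := by
      rw [← X.edgeDom_identityEdge b, ← hb, edgeDom_edge]
    rw [hb0, identityEdge_act_const] at hb
    exact k.succ_ne_zero (hx hb)
  let outEdge (k : Fin m) :
      { f : X.obj 1 // X.edgeDom f = X.act (fun _ => 0) x ∧ ¬ X.IsIdentityEdge f } :=
    ⟨X.edge 0 k.succ x, X.edgeDom_edge _ _ x, hnonid k⟩
  have houtEdge : Function.Injective outEdge := fun k l hkl =>
    Fin.succ_injective m (hx (congrArg Subtype.val hkl))
  have hcard := Nat.card_le_card_of_injective outEdge houtEdge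
  rwa [Nat.card_fin] at hcard

lemma exists_edge_eq_of_pVal_lt [Finite (X.obj 1)] {m : ℕ} (hm : X.pVal < m) (x : X.obj m) :
    ∃ i j : Fin (m + 1), j ≠ 0 ∧ i ≠ j ∧ X.edge 0 i x = X.edge 0 j x := by
  have hx : ¬ Function.Injective fun k : Fin (m + 1) => X.edge 0 k x := fun hx =>
    (X.le_nEdges_of_injective x hx).not_gt (hm.trans_le' (X.nEdges_le_pVal _))
  obtain ⟨i, j, he, hij⟩ := Function.not_injective_iff.mp hx
  by_cases hj : j = 0
  · exact ⟨j, i, hj ▸ hij, Ne.symm hij, he.symm⟩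
  · exact ⟨i, j, hj, hij, he⟩

namespace Spiny

variable {X}

lemma bousfield_injective (hX : X.Spiny) {m : ℕ} (hm : 1 ≤ m) :
    Function.Injective (X.bousfield (m := m)) := by
  intro x y hxy
  apply hX m hm _ (SimpleGraph.isTree_starGraph 0)
  apply Subtype.ext
  funext a b hab hadj
  obtain ⟨-, ha | hb⟩ := SimpleGraph.starGraph_adj.mp hadj
  · subst ha
    obtain ⟨c, rfl⟩ := Fin.exists_succ_eq.mpr hab.ne'
    exact congrFun hxy c
  · exact absurd hab (hb ▸ Fin.not_lt_zero a)

lemma eq_act_update_of_edge_eq (hX : X.Spiny) {m : ℕ} {x : X.obj m} {i j : Fin (m + 1)}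
    (hj : j ≠ 0) (he : X.edge 0 i x = X.edge 0 j x) : x = X.act (Function.update id j i) x := by
  have hm : 1 ≤ m := Nat.one_le_iff_ne_zero.mpr (by rintro rfl; exact hj (Fin.fin_one_eq_zero j))
  apply hX.bousfield_injective hm
  funext k
  simp only [bousfield, edge_act, Function.update_of_ne hj.symm, id]
  by_cases hk : k.succ = j
  · rw [hk, Function.update_self, he]
  · rw [Function.update_of_ne hk]
    rfl

lemma exists_eq_act_of_pVal_lt (hX : X.Spiny) [Finite (X.obj 1)] {n : ℕ} (hn : X.pVal < n + 1)
    (x : X.obj (n + 1)) : ∃ (y : X.obj n) (τ : Fin (n + 2) → Fin (n + 1)), x = X.act τ y := by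
  obtain ⟨i, j, hj, hij, he⟩ := X.exists_edge_eq_of_pVal_lt hn x
  obtain ⟨τ, hτ⟩ : ∃ τ, Function.update id j i = j.succAbove ∘ τ := by
    rw [← Set.range_subset_range_iff_exists_comp, Fin.range_succAbove]
    rintro _ ⟨k, rfl⟩
    by_cases hk : k = j
    · simpa [hk] using hij
    · simpa [Function.update_of_ne hk] using hk
  refine ⟨X.act j.succAbove x, τ, ?_⟩
  rw [X.act_comp, ← hτ, ← hX.eq_act_update_of_edge_eq hj he]

end Spiny

variable {X} in
lemma SymSubset.mem_of_le {Y : X.SymSubset} {m n : ℕ} (hY : ∀ x : X.obj n, x ∈ Y.carrier n)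
    (hmn : m ≤ n) (x : X.obj m) : x ∈ Y.carrier m := by
  have hx : x = X.act (Fin.castLE (by omega)) (X.act (fun k : Fin (n + 1) => Fin.clamp k m) x) := by
    rw [X.act_comp]
    convert (X.act_id x).symm
    funext k
    ext
    simpa [Fin.clamp] using k.is_le
  rw [hx]
  exact Y.act_mem _ (hY _)

end SymSet

theorem stmt7_general (X : SymSet) (hX : X.Spiny) (h2 : Finite (X.obj 1)) :
    X.IsSkeletal X.pVal := by
  intro Y hY m
  induction m using Nat.strong_induction_on with
  | _ m ih =>
    intro x
    rcases le_or_gt m X.pVal with hm | hm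
    · exact Y.mem_of_le hY hm x
    · obtain ⟨n, rfl⟩ := Nat.exists_eq_succ_of_ne_zero (by omega : m ≠ 0)
      obtain ⟨y, τ, rfl⟩ := hX.exists_eq_act_of_pVal_lt hm x
      exact Y.act_mem τ (ih n n.lt_succ_self y)

/-- a nonempty finite partial groupoid (`X_1` nonempty and finite)
is `p(X)`-skeletal. -/
theorem stmt7 (X : SymSet) (hX : X.Spiny) (h1 : Nonempty (X.obj 1)) (h2 : Finite (X.obj 1)) :
    X.IsSkeletal X.pVal :=
  stmt7_general X hX h2
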